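/- Let X be a compact metric space, c : X × X → ℝ a continuous cost function, and μ, ν Borel probability measures on X. Then there exists a coupling π₀ of μ and ν that minimizes the total transportation cost: ∫ c dπ₀ ≤ ∫ c dπ for every coupling π of μ and ν. -/

import Mathlib

/-!
The couplings of `μ` and `ν` form a closed, hence compact, subset of the space of probability
measures on `X × Y` with the weak topology (compact by Riesz–Markov–Kakutani, as `X × Y` is
compact), and `π ↦ ∫ c dπ` is continuous for that topology because `c` is a bounded continuous
function. A continuous function on a nonempty compact set attains its minimum.
-/

open MeasureTheory

namespace MeasureTheory.ProbabilityMeasure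

variable {X Y : Type*} [MeasurableSpace X] [MeasurableSpace Y]

def couplings (μ : ProbabilityMeasure X) (ν : ProbabilityMeasure Y) :
    Set (ProbabilityMeasure (X × Y)) :=
  {π | π.map measurable_fst.aemeasurable = μ ∧ π.map measurable_snd.aemeasurable = ν}

variable {μ : ProbabilityMeasure X} {ν : ProbabilityMeasure Y}

lemma mem_couplings_iff {π : ProbabilityMeasure (X × Y)} :
    π ∈ couplings μ ν ↔
      (π : Measure (X × Y)).map Prod.fst = μ ∧ (π : Measure (X × Y)).map Prod.snd = ν := by
  simp only [couplings, Set.mem_ofPred_eq, ← toMeasure_injective.eq_iff, toMeasure_map]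

lemma prod_mem_couplings : μ.prod ν ∈ couplings μ ν := ⟨map_fst_prod μ ν, map_snd_prod μ ν⟩

variable [TopologicalSpace X] [BorelSpace X] [TopologicalSpace Y] [BorelSpace Y]

lemma isClosed_couplings [OpensMeasurableSpace (X × Y)] [T2Space (ProbabilityMeasure X)]
    [T2Space (ProbabilityMeasure Y)] : IsClosed (couplings μ ν) :=
  (isClosed_eq (continuous_map continuous_fst) continuous_const).inter
    (isClosed_eq (continuous_map continuous_snd) continuous_const)

variable [CompactSpace X] [CompactSpace Y] [SecondCountableTopology X] [SecondCountableTopology Y]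
  [T2Space X] [T2Space Y]

lemma isCompact_couplings : IsCompact (couplings μ ν) :=
  isClosed_couplings.isCompact

lemma exists_isMinOn_integral_couplings (c : C(X × Y, ℝ)) :
    ∃ π₀ ∈ couplings μ ν,
      IsMinOn (fun π : ProbabilityMeasure (X × Y) ↦ ∫ z, c z ∂π) (couplings μ ν) π₀ :=
  isCompact_couplings.exists_isMinOn ⟨_, prod_mem_couplings⟩
    (continuous_integral_continuousMap c).continuousOn

end MeasureTheory.ProbabilityMeasure

/-- On a compact metric space with a continuous cost function, there exists a coupling of
two Borel probability measures minimizing the total transportation cost among all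
couplings (Kantorovich's existence theorem). -/
theorem exists_optimal_coupling {X : Type*} [MetricSpace X] [CompactSpace X]
    [MeasurableSpace X] [BorelSpace X]
    (μ ν : Measure X) [IsProbabilityMeasure μ] [IsProbabilityMeasure ν]
    (c : X × X → ℝ) (hc : Continuous c) :
    ∃ π₀ : Measure (X × X), (π₀.map Prod.fst = μ ∧ π₀.map Prod.snd = ν) ∧
      ∀ π : Measure (X × X), π.map Prod.fst = μ → π.map Prod.snd = ν →
        ∫ z, c z ∂π₀ ≤ ∫ z, c z ∂π := by
  obtain ⟨π₀, hπ₀, hmin⟩ := ProbabilityMeasure.exists_isMinOn_integral_couplings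
    (μ := ⟨μ, inferInstance⟩) (ν := ⟨ν, inferInstance⟩) ⟨c, hc⟩
  refine ⟨π₀, ProbabilityMeasure.mem_couplings_iff.1 hπ₀, fun π hfst hsnd ↦ ?_⟩
  have : IsProbabilityMeasure (π.map Prod.fst) := hfst ▸ inferInstance
  have : IsProbabilityMeasure π := Measure.isProbabilityMeasure_of_map Prod.fst
  exact hmin (ProbabilityMeasure.mem_couplings_iff (π := ⟨π, this⟩).2 ⟨hfst, hsnd⟩)
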